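/- Deleting a constraint of the form [[D,0],[0,0]] • X = 0 with D ≻ 0 and restricting all other constraints to the complementary block preserves the optimal value: inf { C • X : A₁ • X = 0, A_i • X = b_i (i ≥ 2), X ⪰ 0 } equals inf { C₂₂ • Y : (A_i)₂₂ • Y = b_i (i ≥ 2), Y ⪰ 0 }, where subscript ₂₂ denotes the bottom-right (n−k)×(n−k) block. -/

import Mathlib

open Matrix
open scoped ComplexOrder

/-!
If `X ⪰ 0` and `[[D,0],[0,0]] • X = D • X₁₁ = 0` with `D ≻ 0`, then `X₁₁ = 0`: writing
`D = Sᴴ S` with `S` invertible, `D • X₁₁` is the trace of the PSD matrix `S X₁₁ Sᴴ`. A PSD matrix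
with a zero diagonal entry has the whole row and column through it zero, so `X` is supported on
its `₂₂` block. Hence the feasible `X` are exactly the `fromBlocks 0 0 0 Y` with `Y ⪰ 0`, and on
those every trace pairing only sees the `₂₂` block: the two sets of values coincide.
-/

namespace Matrix

variable {𝕜 : Type*} [RCLike 𝕜] {n k l : Type*} [Fintype n] [Fintype k] [Fintype l]

lemma PosSemidef.apply_eq_zero_of_diag_eq_zero {M : Matrix n n 𝕜} (hM : M.PosSemidef) {j : n}
    (hj : M j j = 0) (i : n) : M i j = 0 := by
  classical
  have hcol : M *ᵥ Pi.single j 1 = 0 :=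
    (hM.dotProduct_mulVec_zero_iff _).mp (by simp [hj])
  simpa using congrFun hcol i

open scoped MatrixOrder in
lemma PosSemidef.eq_zero_of_trace_posDef_mul_eq_zero [DecidableEq n] {D M : Matrix n n 𝕜}
    (hD : D.PosDef) (hM : M.PosSemidef) (h : (D * M).trace = 0) : M = 0 := by
  obtain ⟨S, hS, rfl⟩ := CStarAlgebra.isStrictlyPositive_iff_eq_star_mul_self.mp
    hD.isStrictlyPositive
  lift S to (Matrix n n 𝕜)ˣ using hS
  have hSMS : ((S : Matrix n n 𝕜) * M * (S : Matrix n n 𝕜)ᴴ).PosSemidef :=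
    hM.mul_mul_conjTranspose_same _
  have hzero : (S : Matrix n n 𝕜) * M * (S : Matrix n n 𝕜)ᴴ = 0 := by
    rw [← hSMS.trace_eq_zero_iff, trace_mul_cycle, ← star_eq_conjTranspose]
    exact h
  calc M = ↑S⁻¹ * (↑S * M * ↑(star S)) * ↑(star S)⁻¹ := by
        simp only [mul_assoc, Units.inv_mul_cancel_left, Units.mul_inv, mul_one]
    _ = 0 := by rw [Units.coe_star, star_eq_conjTranspose, hzero, mul_zero, zero_mul]

lemma PosSemidef.fromBlocks_zero {Y : Matrix l l 𝕜} (hY : Y.PosSemidef) :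
    (fromBlocks (0 : Matrix k k 𝕜) 0 0 Y).PosSemidef := by
  classical
  have := hY.conjTranspose_mul_mul_same (fromCols (0 : Matrix l k 𝕜) (1 : Matrix l l 𝕜))
  rw [conjTranspose_fromCols_eq_fromRows_conjTranspose, fromRows_mul, fromRows_mul_fromCols,
    conjTranspose_zero, conjTranspose_one, Matrix.one_mul] at this
  simpa only [Matrix.zero_mul, Matrix.mul_zero, Matrix.mul_one] using this

lemma PosSemidef.eq_fromBlocks_of_toBlocks₁₁_eq_zero {X : Matrix (k ⊕ l) (k ⊕ l) 𝕜}
    (hX : X.PosSemidef) (h : X.toBlocks₁₁ = 0) : X = fromBlocks 0 0 0 X.toBlocks₂₂ := by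
  have hdiag (i : k) : X (Sum.inl i) (Sum.inl i) = 0 := congr_fun₂ h i i
  have hcol (i : k) (j : k ⊕ l) : X j (Sum.inl i) = 0 :=
    hX.apply_eq_zero_of_diag_eq_zero (hdiag i) j
  have hrow (i : k) (j : k ⊕ l) : X (Sum.inl i) j = 0 := by
    rw [← hX.isHermitian.apply, hcol, star_zero]
  ext (i | i) (j | j) <;> simp [hcol, hrow, toBlocks₂₂]

section Trace

variable {R : Type*} [CommSemiring R]

lemma trace_fromBlocks (A : Matrix k k R) (B : Matrix k l R) (C : Matrix l k R)
    (D : Matrix l l R) : (fromBlocks A B C D).trace = A.trace + D.trace := by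
  simp [trace, Fintype.sum_sum_type]

lemma trace_fromBlocks_zero_mul (D : Matrix k k R) (X : Matrix (k ⊕ l) (k ⊕ l) R) :
    (fromBlocks D 0 0 0 * X).trace = (D * X.toBlocks₁₁).trace := by
  conv_lhs => rw [← fromBlocks_toBlocks X]
  simp [fromBlocks_multiply, trace_fromBlocks]

lemma trace_mul_zero_fromBlocks (A : Matrix (k ⊕ l) (k ⊕ l) R) (Y : Matrix l l R) :
    (A * fromBlocks 0 0 0 Y).trace = (A.toBlocks₂₂ * Y).trace := by
  conv_lhs => rw [← fromBlocks_toBlocks A]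
  simp [fromBlocks_multiply, trace_fromBlocks]

end Trace

lemma posSemidef_and_trace_fromBlocks_mul_eq_zero_iff [DecidableEq k] {D : Matrix k k 𝕜}
    (hD : D.PosDef) {X : Matrix (k ⊕ l) (k ⊕ l) 𝕜} :
    X.PosSemidef ∧ (fromBlocks D 0 0 0 * X).trace = 0 ↔
      ∃ Y : Matrix l l 𝕜, Y.PosSemidef ∧ fromBlocks 0 0 0 Y = X := by
  constructor
  · rintro ⟨hX, htr⟩
    have hX₁₁ : X.toBlocks₁₁ = 0 := (hX.submatrix Sum.inl).eq_zero_of_trace_posDef_mul_eq_zero hD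
      (by rwa [← trace_fromBlocks_zero_mul])
    exact ⟨X.toBlocks₂₂, hX.submatrix Sum.inr, (hX.eq_fromBlocks_of_toBlocks₁₁_eq_zero hX₁₁).symm⟩
  · rintro ⟨Y, hY, rfl⟩
    exact ⟨hY.fromBlocks_zero, by simp [trace_fromBlocks_zero_mul]⟩

end Matrix

theorem facial_reduction_step_optimal_value_general {k l m : ℕ}
    (D : Matrix (Fin k) (Fin k) ℝ) (hD : D.PosDef)
    (C : Matrix (Fin k ⊕ Fin l) (Fin k ⊕ Fin l) ℝ)
    (A : Fin m → Matrix (Fin k ⊕ Fin l) (Fin k ⊕ Fin l) ℝ)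
    (b : Fin m → ℝ) :
    sInf {v : EReal | ∃ X : Matrix (Fin k ⊕ Fin l) (Fin k ⊕ Fin l) ℝ,
        X.PosSemidef ∧ ((fromBlocks D 0 0 0) * X).trace = 0 ∧
        (∀ i, ((A i) * X).trace = b i) ∧ v = ((C * X).trace : ℝ)} =
    sInf {v : EReal | ∃ Y : Matrix (Fin l) (Fin l) ℝ,
        Y.PosSemidef ∧ (∀ i, ((A i).toBlocks₂₂ * Y).trace = b i) ∧
        v = ((C.toBlocks₂₂ * Y).trace : ℝ)} := by
  congr 1
  ext v
  constructor
  · rintro ⟨X, hX, htr, hAX, rfl⟩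
    obtain ⟨Y, hY, rfl⟩ := (posSemidef_and_trace_fromBlocks_mul_eq_zero_iff hD).mp ⟨hX, htr⟩
    exact ⟨Y, hY, by simpa only [trace_mul_zero_fromBlocks] using hAX,
      by rw [trace_mul_zero_fromBlocks]⟩
  · rintro ⟨Y, hY, hAY, rfl⟩
    obtain ⟨hX, htr⟩ := (posSemidef_and_trace_fromBlocks_mul_eq_zero_iff hD).mpr ⟨Y, hY, rfl⟩
    exact ⟨_, hX, htr, by simpa only [trace_mul_zero_fromBlocks] using hAY,
      by rw [trace_mul_zero_fromBlocks]⟩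

theorem facial_reduction_step_optimal_value {k l m : ℕ}
    (D : Matrix (Fin k) (Fin k) ℝ) (hD : D.PosDef)
    (C : Matrix (Fin k ⊕ Fin l) (Fin k ⊕ Fin l) ℝ) (hC : C.IsHermitian)
    (A : Fin m → Matrix (Fin k ⊕ Fin l) (Fin k ⊕ Fin l) ℝ)
    (hA : ∀ i, (A i).IsHermitian) (b : Fin m → ℝ) :
    sInf {v : EReal | ∃ X : Matrix (Fin k ⊕ Fin l) (Fin k ⊕ Fin l) ℝ,
        X.PosSemidef ∧ ((fromBlocks D 0 0 0) * X).trace = 0 ∧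
        (∀ i, ((A i) * X).trace = b i) ∧ v = ((C * X).trace : ℝ)} =
    sInf {v : EReal | ∃ Y : Matrix (Fin l) (Fin l) ℝ,
        Y.PosSemidef ∧ (∀ i, ((A i).toBlocks₂₂ * Y).trace = b i) ∧
        v = ((C.toBlocks₂₂ * Y).trace : ℝ)} :=
  facial_reduction_step_optimal_value_general D hD C A b
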